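/- Let n, m, k, r be positive integers with n ≥ m ≥ k², and let ε ∈ (0,1] be a real with ε ≥ 3r·√(k·ln(n+1)) / m^{k/4}. Then there exists an (ε,ε,m)-balanced coloring γ : C([n],k) → [r]. -/

import Mathlib

/-- The coloring `γ` of the `k`-element subsets of `{1,…,n}` with `r` colors is
`ε`-balanced on `A`. -/
def EpsBalancedOn {n k r : ℕ} (γ : {S : Finset (Fin n) // S.card = k} → Fin r) (ε : ℝ)
    (A : Finset (Fin n)) : Prop :=
  ∀ i : Fin r,
    ((1 - ε) / r) * (A.card.choose k : ℝ) ≤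
      (Nat.card {S : {S : Finset (Fin n) // S.card = k} // γ S = i ∧ S.1 ⊆ A} : ℝ) ∧
    (Nat.card {S : {S : Finset (Fin n) // S.card = k} // γ S = i ∧ S.1 ⊆ A} : ℝ) ≤
      ((1 + ε) / r) * (A.card.choose k : ℝ)

/-- `γ` is `(ε,δ,m)`-balanced: for each `ℓ ∈ {m,…,n}`, a uniformly random `ℓ`-element
subset of `{1,…,n}` is `ε`-balanced for `γ` with probability at least `1 - δ`. -/
def IsBalancedColoring {n k r : ℕ} (m : ℕ) (ε δ : ℝ)
    (γ : {S : Finset (Fin n) // S.card = k} → Fin r) : Prop :=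
  ∀ ℓ : ℕ, m ≤ ℓ → ℓ ≤ n →
    (1 - δ) * (n.choose ℓ : ℝ) ≤
      (Nat.card {A : Finset (Fin n) // A.card = ℓ ∧ EpsBalancedOn γ ε A} : ℝ)

/-!
A uniformly random coloring works; probabilities are counted over all `r ^ binom(n, k)`
colorings. For a fixed `A` with `|A| ≥ m`, the number of `k`-subsets of `A` of a given color is
binomial with mean `binom(|A|, k) / r`, so by Chernoff's bound (through the exponential moment
`(e^t + r - 1) ^ N ≤ r ^ N e^{N(t + t²)/r}`, `|t| ≤ 1`) the set `A` fails to be `ε`-balanced with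
probability at most `p = 2r exp(-ε² binom(m, k) / (4r))`. By Markov's inequality, for each
`ℓ ∈ [m, n]` more than an `ε`-fraction of the `ℓ`-sets is unbalanced with probability at most
`p / ε`, and a union bound over the `n + 1 - m` sizes leaves a good coloring once
`(n + 1 - m) p < ε`. Since `binom(m, k) ≥ (m / k) ^ k ≥ m ^ (k / 2)` for `k² ≤ m`, the hypothesis on
`ε` gives `ε² binom(m, k) ≥ 9 r² k ln(n + 1)`, which makes `(n + 1) p < ε`.
-/

open Finset Real

lemma card_filter_le_mul_le_sum {ι : Type*} (s : Finset ι) {f : ι → ℝ}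
    (hf : ∀ x ∈ s, 0 ≤ f x) (a : ℝ) : (#{x ∈ s | a ≤ f x} : ℝ) * a ≤ ∑ x ∈ s, f x :=
  calc (#{x ∈ s | a ≤ f x} : ℝ) * a = ∑ x ∈ s with a ≤ f x, a := by
        rw [sum_const, nsmul_eq_mul]
    _ ≤ ∑ x ∈ s with a ≤ f x, f x := sum_le_sum fun x hx => (mem_filter.1 hx).2
    _ ≤ ∑ x ∈ s, f x :=
        sum_le_sum_of_subset_of_nonneg (filter_subset _ _) fun x hx _ => hf x hx

lemma exp_add_sub_one_le {x t : ℝ} (hx : 0 < x) (ht : |t| ≤ 1) :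
    exp t + (x - 1) ≤ x * exp ((t + t ^ 2) / x) :=
  calc exp t + (x - 1) ≤ x * (1 + (t + t ^ 2) / x) := by
        have := (abs_le.1 (abs_exp_sub_one_sub_id_le ht)).2
        rw [mul_add, mul_div_cancel₀ _ hx.ne']
        linarith
    _ ≤ x * exp ((t + t ^ 2) / x) := by
        gcongr
        linarith [add_one_le_exp ((t + t ^ 2) / x)]

section ColorCount

variable {α : Type*} [Fintype α] [DecidableEq α] {r : ℕ}

def colorCount (T : Finset α) (γ : α → Fin r) (i : Fin r) : ℕ := #{s ∈ T | γ s = i}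

lemma exp_mul_colorCount (T : Finset α) (γ : α → Fin r) (i : Fin r) (t : ℝ) :
    exp (t * colorCount T γ i) = ∏ s, if s ∈ T ∧ γ s = i then exp t else 1 := by
  rw [prod_ite, prod_const_one, mul_one, prod_const, ← exp_nat_mul, mul_comm, colorCount,
    filter_and, filter_mem_eq_inter, univ_inter, inter_filter, inter_univ]

lemma sum_exp_mul_colorCount (T : Finset α) (i : Fin r) (t : ℝ) :
    ∑ γ : α → Fin r, exp (t * colorCount T γ i) =
      (exp t + (r - 1)) ^ #T * r ^ (Fintype.card α - #T) := by
  have hcolor : ∀ s, ∑ c : Fin r, (if s ∈ T ∧ c = i then exp t else 1) =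
      if s ∈ T then exp t + (r - 1) else (r : ℝ) := by
    intro s
    split_ifs with hs
    · simp [hs, sum_ite, filter_eq', filter_ne', Nat.cast_sub (Fin.pos i)]
    · simp [hs]
  rw [sum_congr rfl fun γ _ => exp_mul_colorCount T γ i t,
    ← Fintype.prod_sum fun s (c : Fin r) => if s ∈ T ∧ c = i then exp t else 1]
  simp_rw [hcolor, prod_ite, prod_const, filter_mem_eq_inter, univ_inter, filter_not,
    filter_mem_eq_inter, univ_inter, card_univ_sdiff]

lemma card_mul_le_mul_colorCount_le (T : Finset α) (i : Fin r) (hr : 0 < r) {t : ℝ}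
    (ht : |t| ≤ 1) (b : ℝ) :
    (#{γ : α → Fin r | t * b ≤ t * colorCount T γ i} : ℝ) ≤
      r ^ Fintype.card α * exp (#T * (t + t ^ 2) / r - t * b) := by
  have hr' : (0 : ℝ) < r := Nat.cast_pos.2 hr
  have hmarkov := card_filter_le_mul_le_sum univ
    (f := fun γ : α → Fin r => exp (t * colorCount T γ i)) (fun _ _ => (exp_pos _).le)
    (exp (t * b))
  simp_rw [exp_le_exp, sum_exp_mul_colorCount] at hmarkov
  rw [exp_sub, ← mul_div_assoc, le_div_iff₀ (exp_pos _)]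
  calc _ ≤ (exp t + (r - 1)) ^ #T * r ^ (Fintype.card α - #T) := hmarkov
    _ ≤ (r * exp ((t + t ^ 2) / r)) ^ #T * r ^ (Fintype.card α - #T) := by
        gcongr
        · linarith [exp_pos t, (Nat.one_le_cast (α := ℝ)).2 hr]
        · exact exp_add_sub_one_le hr' ht
    _ = r ^ Fintype.card α * exp (#T * (t + t ^ 2) / r) := by
        rw [mul_pow, ← exp_nat_mul, mul_right_comm, ← pow_add,
          Nat.add_sub_cancel' (card_le_univ T), mul_div_assoc, mul_comm]

/-- Chernoff's bound: `t = ∓ε/2` in `card_mul_le_mul_colorCount_le`. -/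
theorem card_colorCount_far_le (T : Finset α) (i : Fin r) (hr : 0 < r) {ε : ℝ} (hε0 : 0 < ε)
    (hε1 : ε ≤ 1) :
    (#{γ : α → Fin r | (colorCount T γ i : ℝ) ≤ (1 - ε) * #T / r ∨
        (1 + ε) * #T / r ≤ colorCount T γ i} : ℝ) ≤
      2 * r ^ Fintype.card α * exp (-(ε ^ 2 * #T) / (4 * r)) := by
  have hlow := card_mul_le_mul_colorCount_le T i hr (t := -(ε / 2))
    (by rw [abs_neg, abs_of_pos (by linarith)]; linarith) ((1 - ε) * #T / r)
  have hhigh := card_mul_le_mul_colorCount_le T i hr (t := ε / 2)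
    (by rw [abs_of_pos (by linarith)]; linarith) ((1 + ε) * #T / r)
  simp_rw [neg_mul, neg_le_neg_iff, mul_le_mul_iff_right₀ (half_pos hε0)] at hlow hhigh
  rw [filter_or]
  calc _ ≤ (#{γ : α → Fin r | (colorCount T γ i : ℝ) ≤ (1 - ε) * #T / r} : ℝ) +
        #{γ : α → Fin r | (1 + ε) * #T / r ≤ colorCount T γ i} := mod_cast card_union_le _ _
    _ ≤ _ := add_le_add hlow hhigh
    _ = _ := by ring_nf

end ColorCount

section FirstMoment

variable {Γ X : Type*} [Fintype Γ] (bad : Γ → X → Prop) [DecidableRel bad]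

/-- Markov's inequality for the number of bad elements of `S`, after double counting. -/
lemma card_many_bad_mul_le (S : Finset X) {p ε : ℝ} (hp : 0 ≤ p) (hε : 0 < ε)
    (hbad : ∀ x ∈ S, (#{γ | bad γ x} : ℝ) ≤ p * Fintype.card Γ) :
    (#{γ | ε * #S < #{x ∈ S | bad γ x}} : ℝ) * ε ≤ p * Fintype.card Γ := by
  rcases S.eq_empty_or_nonempty with rfl | hS
  · simpa using mul_nonneg hp (Nat.cast_nonneg _)
  have hS' : (0 : ℝ) < #S := Nat.cast_pos.2 hS.card_pos
  have hsum : ∑ γ, (#{x ∈ S | bad γ x} : ℝ) ≤ #S * (p * Fintype.card Γ) := by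
    have := sum_card_bipartiteAbove_eq_sum_card_bipartiteBelow (s := univ) (t := S) (r := bad)
    simp only [bipartiteAbove, bipartiteBelow] at this
    rw [← Nat.cast_sum, this, Nat.cast_sum]
    exact (sum_le_sum hbad).trans_eq (by rw [sum_const, nsmul_eq_mul])
  have hmarkov := card_filter_le_mul_le_sum univ
    (f := fun γ => (#{x ∈ S | bad γ x} : ℝ)) (fun _ _ => Nat.cast_nonneg _) (ε * #S)
  rw [← mul_le_mul_iff_left₀ hS']
  calc _ ≤ (#{γ | ε * #S ≤ (#{x ∈ S | bad γ x} : ℝ)} : ℝ) * (ε * #S) := by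
        rw [← mul_assoc]
        gcongr
        exact le_of_lt
    _ ≤ _ := hmarkov.trans hsum
    _ = _ := mul_comm _ _

theorem exists_forall_card_bad_le {ι : Type*} [Nonempty Γ] (I : Finset ι) (S : ι → Finset X)
    {p ε : ℝ} (hp : 0 ≤ p) (hε : 0 < ε)
    (hbad : ∀ ℓ ∈ I, ∀ x ∈ S ℓ, (#{γ | bad γ x} : ℝ) ≤ p * Fintype.card Γ)
    (hIp : #I * p < ε) :
    ∃ γ, ∀ ℓ ∈ I, (#{x ∈ S ℓ | bad γ x} : ℝ) ≤ ε * #(S ℓ) := by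
  classical
  set B : ι → Finset Γ := fun ℓ => {γ | ε * #(S ℓ) < #{x ∈ S ℓ | bad γ x}}
  have hΓ : (0 : ℝ) < Fintype.card Γ := Nat.cast_pos.2 Fintype.card_pos
  have hB : (#(I.biUnion B) : ℝ) < #(univ : Finset Γ) := by
    rw [card_univ, ← mul_lt_mul_iff_left₀ hε]
    calc (#(I.biUnion B) : ℝ) * ε ≤ (∑ ℓ ∈ I, (#(B ℓ) : ℝ)) * ε := by
          gcongr; exact_mod_cast card_biUnion_le
      _ ≤ ∑ ℓ ∈ I, p * Fintype.card Γ := by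
          rw [sum_mul]
          exact sum_le_sum fun ℓ hℓ => card_many_bad_mul_le bad (S ℓ) hp hε (hbad ℓ hℓ)
      _ < Fintype.card Γ * ε := by
          rw [sum_const, nsmul_eq_mul, ← mul_assoc, mul_comm _ ε]
          gcongr
  obtain ⟨γ, -, hγ⟩ := exists_mem_notMem_of_card_lt_card (mod_cast hB)
  refine ⟨γ, fun ℓ hℓ => not_lt.1 fun h => hγ (mem_biUnion.2 ⟨ℓ, hℓ, ?_⟩)⟩
  simpa [B] using h

end FirstMoment

section KSubsets

variable {n k r : ℕ}

def kSubsetsOf (k : ℕ) (A : Finset (Fin n)) : Finset {S : Finset (Fin n) // S.card = k} :=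
  {S | S.1 ⊆ A}

lemma card_kSubsetsOf (A : Finset (Fin n)) : #(kSubsetsOf k A) = A.card.choose k := by
  rw [← card_powersetCard]
  refine card_bij (fun S _ => S.1) (fun S hS => ?_) (fun _ _ _ _ => Subtype.ext) fun B hB => ?_
  · exact mem_powersetCard.2 ⟨(mem_filter.1 hS).2, S.2⟩
  · obtain ⟨hBA, hB⟩ := mem_powersetCard.1 hB
    exact ⟨⟨B, hB⟩, mem_filter.2 ⟨mem_univ _, hBA⟩, rfl⟩

lemma natCard_colored_subsets (γ : {S : Finset (Fin n) // S.card = k} → Fin r) (i : Fin r)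
    (A : Finset (Fin n)) :
    Nat.card {S // γ S = i ∧ S.1 ⊆ A} = colorCount (kSubsetsOf k A) γ i := by
  rw [Nat.card_eq_fintype_card, Fintype.card_subtype, colorCount, kSubsetsOf, filter_filter]
  simp_rw [and_comm]

lemma exists_colorCount_far_of_not_epsBalancedOn {γ : {S : Finset (Fin n) // S.card = k} → Fin r}
    {ε : ℝ} {A : Finset (Fin n)} (h : ¬ EpsBalancedOn γ ε A) :
    ∃ i, (colorCount (kSubsetsOf k A) γ i : ℝ) ≤ (1 - ε) * #(kSubsetsOf k A) / r ∨
      (1 + ε) * #(kSubsetsOf k A) / r ≤ colorCount (kSubsetsOf k A) γ i := by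
  simp only [EpsBalancedOn, natCard_colored_subsets, not_forall, not_and_or, not_le] at h
  obtain ⟨i, hi⟩ := h
  rw [card_kSubsetsOf, mul_div_right_comm, mul_div_right_comm (1 + ε)]
  exact ⟨i, hi.imp le_of_lt le_of_lt⟩

open scoped Classical in
lemma card_not_epsBalancedOn_le (hr : 0 < r) {ε : ℝ} (hε0 : 0 < ε) (hε1 : ε ≤ 1) {m : ℕ}
    {A : Finset (Fin n)} (hA : m ≤ A.card) :
    (#{γ : {S : Finset (Fin n) // S.card = k} → Fin r | ¬ EpsBalancedOn γ ε A} : ℝ) ≤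
      2 * r * exp (-(ε ^ 2 * m.choose k) / (4 * r)) *
        Fintype.card ({S : Finset (Fin n) // S.card = k} → Fin r) := by
  set T := kSubsetsOf k A
  set far : Fin r → Finset ({S : Finset (Fin n) // S.card = k} → Fin r) := fun i =>
    {γ | (colorCount T γ i : ℝ) ≤ (1 - ε) * #T / r ∨ (1 + ε) * #T / r ≤ colorCount T γ i}
  have hsub : (univ.filter fun γ => ¬ EpsBalancedOn γ ε A) ⊆ univ.biUnion far := fun γ hγ => by
    obtain ⟨i, hi⟩ := exists_colorCount_far_of_not_epsBalancedOn (mem_filter.1 hγ).2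
    exact mem_biUnion.2 ⟨i, mem_univ _, mem_filter.2 ⟨mem_univ _, hi⟩⟩
  have hT : (m.choose k : ℝ) ≤ #T := by
    rw [card_kSubsetsOf]; exact_mod_cast Nat.choose_le_choose k hA
  calc _ ≤ (∑ i, #(far i) : ℝ) := mod_cast (card_le_card hsub).trans card_biUnion_le
    _ ≤ ∑ i : Fin r, 2 * r ^ Fintype.card {S : Finset (Fin n) // S.card = k} *
          exp (-(ε ^ 2 * #T) / (4 * r)) :=
        sum_le_sum fun i _ => card_colorCount_far_le T i hr hε0 hε1
    _ = 2 * r * exp (-(ε ^ 2 * #T) / (4 * r)) *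
          Fintype.card ({S : Finset (Fin n) // S.card = k} → Fin r) := by
        rw [sum_const, card_univ, Fintype.card_fin, nsmul_eq_mul, Fintype.card_fun,
          Fintype.card_fin, Nat.cast_pow]
        ring
    _ ≤ _ := by gcongr

end KSubsets

open scoped Classical in
lemma isBalancedColoring_of_card_not_epsBalancedOn_le {n k r m : ℕ} {ε δ : ℝ}
    {γ : {S : Finset (Fin n) // S.card = k} → Fin r}
    (h : ∀ ℓ ∈ Icc m n, (#{A ∈ powersetCard ℓ univ | ¬ EpsBalancedOn γ ε A} : ℝ) ≤
      δ * #(powersetCard ℓ (univ : Finset (Fin n)))) :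
    IsBalancedColoring m ε δ γ := by
  intro ℓ hmℓ hℓn
  have hbad := h ℓ (mem_Icc.2 ⟨hmℓ, hℓn⟩)
  have hsplit := card_filter_add_card_filter_not (s := powersetCard ℓ (univ : Finset (Fin n)))
    (EpsBalancedOn γ ε)
  have hgood : (univ.filter fun A : Finset (Fin n) => A.card = ℓ ∧ EpsBalancedOn γ ε A) =
      {A ∈ powersetCard ℓ (univ : Finset (Fin n)) | EpsBalancedOn γ ε A} := by
    ext; simp [mem_powersetCard]
  rw [card_powersetCard, card_univ, Fintype.card_fin] at hbad hsplit
  rw [Nat.card_eq_fintype_card, Fintype.card_subtype, hgood]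
  have := congrArg (Nat.cast (R := ℝ)) hsplit
  push_cast at this
  linarith

lemma pow_le_pow_mul_choose {m k : ℕ} (h : k ≤ m) : m ^ k ≤ k ^ k * m.choose k := by
  have hdesc : m ^ k * k.descFactorial k ≤ k ^ k * m.descFactorial k := by
    simp_rw [Nat.descFactorial_eq_prod_range]
    rw [pow_eq_prod_const, pow_eq_prod_const, ← prod_mul_distrib, ← prod_mul_distrib]
    refine prod_le_prod' fun i hi => ?_
    have hi := mem_range.1 hi
    obtain ⟨a, rfl⟩ := Nat.exists_eq_add_of_lt hi
    obtain ⟨b, rfl⟩ := Nat.exists_eq_add_of_le h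
    rw [show i + a + 1 - i = a + 1 by omega, show i + a + 1 + b - i = a + 1 + b by omega]
    nlinarith
  rw [Nat.descFactorial_self, Nat.descFactorial_eq_factorial_mul_choose, mul_comm,
    mul_left_comm] at hdesc
  exact Nat.le_of_mul_le_mul_left hdesc k.factorial_pos

lemma sqrt_pow_le_choose {m k : ℕ} (h : k ^ 2 ≤ m) : √m ^ k ≤ m.choose k := by
  have hk : (k : ℝ) ≤ √m := Real.le_sqrt_of_sq_le (by exact_mod_cast h)
  have hkk : (0 : ℝ) < k ^ k := by
    rcases k.eq_zero_or_pos with rfl | hk0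
    · simp
    · positivity
  have hkm : k ≤ m := (Nat.le_self_pow two_ne_zero k).trans h
  refine le_of_mul_le_mul_left ?_ hkk
  calc (k : ℝ) ^ k * √m ^ k ≤ √m ^ k * √m ^ k := by gcongr
    _ = (m : ℝ) ^ k := by rw [← mul_pow, Real.mul_self_sqrt (Nat.cast_nonneg _)]
    _ ≤ k ^ k * m.choose k := by exact_mod_cast pow_le_pow_mul_choose hkm

lemma sq_mul_choose_ge {n m k r : ℕ} (hkm : k ^ 2 ≤ m) {ε : ℝ}
    (h : 3 * r * √(k * log (n + 1)) ≤ ε * (m : ℝ) ^ ((k : ℝ) / 4)) :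
    9 * r ^ 2 * (k * log (n + 1)) ≤ ε ^ 2 * m.choose k := by
  have hq : ((m : ℝ) ^ ((k : ℝ) / 4)) ^ 2 = √m ^ k := by
    rw [sqrt_eq_rpow, ← rpow_natCast, ← rpow_natCast, ← rpow_mul (Nat.cast_nonneg _),
      ← rpow_mul (Nat.cast_nonneg _)]
    ring_nf
  have hL : 0 ≤ (k : ℝ) * log (n + 1) :=
    mul_nonneg (Nat.cast_nonneg _) (log_nonneg (le_add_of_nonneg_left (Nat.cast_nonneg _)))
  calc 9 * r ^ 2 * (k * log (n + 1)) = (3 * r * √(k * log (n + 1))) ^ 2 := by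
        rw [mul_pow, sq_sqrt hL]; ring
    _ ≤ (ε * (m : ℝ) ^ ((k : ℝ) / 4)) ^ 2 := pow_le_pow_left₀ (by positivity) h 2
    _ ≤ ε ^ 2 * m.choose k := by
        rw [mul_pow, hq]; gcongr; exact sqrt_pow_le_choose hkm

lemma rpow_div_four_le_exp {n m : ℕ} (hmn : m ≤ n) (k : ℕ) :
    (m : ℝ) ^ ((k : ℝ) / 4) ≤ exp (k * log (n + 1) / 4) :=
  calc (m : ℝ) ^ ((k : ℝ) / 4) ≤ ((n : ℝ) + 1) ^ ((k : ℝ) / 4) := by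
        gcongr; exact_mod_cast Nat.le_succ_of_le hmn
    _ = exp (k * log (n + 1) / 4) := by rw [rpow_def_of_pos (by positivity)]; ring_nf

/-- The failure probability summed over the sizes `ℓ ∈ [m, n]` is below `ε`. -/
lemma card_Icc_mul_exp_lt {n m k r : ℕ} (hk : 0 < k) (hr : 0 < r) (hkm : k ^ 2 ≤ m)
    (hmn : m ≤ n) {ε : ℝ}
    (h : 3 * r * √(k * log (n + 1)) / (m : ℝ) ^ ((k : ℝ) / 4) ≤ ε) :
    (n + 1 - m : ℕ) * (2 * r * exp (-(ε ^ 2 * m.choose k) / (4 * r))) < ε := by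
  have hm : 0 < m := (Nat.one_le_pow 2 k hk).trans hkm
  have hq := rpow_div_four_le_exp hmn k
  have hq0 : (0 : ℝ) < (m : ℝ) ^ ((k : ℝ) / 4) := rpow_pos_of_pos (Nat.cast_pos.2 hm) _
  have hchoose := sq_mul_choose_ge hkm ((div_le_iff₀ hq0).1 h)
  set L := log ((n : ℝ) + 1)
  have hk' : (1 : ℝ) ≤ k := by exact_mod_cast hk
  have hr' : (1 : ℝ) ≤ r := by exact_mod_cast hr
  have hL2 : log 2 ≤ L := log_le_log (by norm_num) (by norm_cast; omega)
  have hL0 : 0 < L := (log_pos one_lt_two).trans_le hL2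
  have hexpL : exp L = n + 1 := exp_log (by positivity)
  have hsqrt : 1 < 3 * √(k * L) := by
    have : (1 / 3 : ℝ) < √(k * L) := (lt_sqrt (by norm_num)).2 (by nlinarith [log_two_gt_d9])
    linarith
  calc ((n + 1 - m : ℕ) : ℝ) * (2 * r * exp (-(ε ^ 2 * m.choose k) / (4 * r)))
      ≤ exp L * (2 * r * exp (-(9 * r * (k * L)) / 4)) := by
        gcongr ?_ * (_ * exp ?_)
        · rw [hexpL]; exact_mod_cast Nat.sub_le _ _
        · rw [div_le_div_iff₀ (by positivity) (by norm_num)]; nlinarith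
    _ = 2 * r * exp (L + -(9 * r * (k * L)) / 4) := by rw [exp_add]; ring
    _ ≤ 2 * r * exp (-L + -(k * L / 4)) := by
        refine mul_le_mul_of_nonneg_left (exp_le_exp.2 ?_) (by positivity)
        nlinarith [mul_le_mul_of_nonneg_right hr' (by positivity : 0 ≤ k * L),
          mul_le_mul_of_nonneg_right hk' hL0.le]
    _ = 2 * exp (-L) * (r * exp (-(k * L / 4))) := by rw [exp_add]; ring
    _ ≤ 1 * (r * exp (-(k * L / 4))) := by
        gcongr
        rw [exp_neg, hexpL, ← div_eq_mul_inv, div_le_one (by positivity)]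
        norm_cast; omega
    _ < 3 * √(k * L) * (r * exp (-(k * L / 4))) := by gcongr
    _ = 3 * r * √(k * L) / exp (k * L / 4) := by rw [exp_neg]; ring
    _ ≤ 3 * r * √(k * L) / (m : ℝ) ^ ((k : ℝ) / 4) := by gcongr
    _ ≤ ε := h

/-- Corollary 3.3 of the paper: existence of balanced colorings, specialized. -/
theorem balanced_coloring_exists' (n m k r : ℕ)
    (hk : 0 < k) (hr : 0 < r) (hkm : k ^ 2 ≤ m) (hmn : m ≤ n)
    (ε : ℝ) (hε : ε ∈ Set.Ioc (0 : ℝ) 1)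
    (h : 3 * r * Real.sqrt (k * Real.log ((n : ℝ) + 1)) / (m : ℝ) ^ ((k : ℝ) / 4) ≤ ε) :
    ∃ γ : {S : Finset (Fin n) // S.card = k} → Fin r, IsBalancedColoring m ε ε γ := by
  classical
  obtain ⟨hε0, hε1⟩ := hε
  have : Nonempty (Fin r) := ⟨⟨0, hr⟩⟩
  obtain ⟨γ, hγ⟩ := exists_forall_card_bad_le
    (fun (γ : {S : Finset (Fin n) // S.card = k} → Fin r) A => ¬ EpsBalancedOn γ ε A) (Icc m n)
    (fun ℓ => powersetCard ℓ univ) (by positivity) hε0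
    (fun ℓ hℓ A hA => card_not_epsBalancedOn_le hr hε0 hε1
      (((mem_Icc.1 hℓ).1).trans_eq (mem_powersetCard.1 hA).2.symm))
    (by rw [Nat.card_Icc]; exact card_Icc_mul_exp_lt hk hr hkm hmn h)
  exact ⟨γ, isBalancedColoring_of_card_not_epsBalancedOn_le hγ⟩
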